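/- Let F be a complex Borel measure on ℝ² (so its total variation measure |F| is finite), let T > 0, and define C : ℝ × ℝ → ℂ by C(s,t) = ∫_{ℝ²} e^{i(sλ − tλ')} dF(λ,λ'). Then C(s+T, t+T) = C(s,t) for all s, t ∈ ℝ if and only if F is concentrated on the union of the lines L_k = {(λ,λ') ∈ ℝ² : λ − λ' = 2πk/T}, k ∈ ℤ, i.e. |F|({(λ,λ') ∈ ℝ² : λ − λ' ∉ (2π/T)·ℤ}) = 0. -/

import Mathlib

/-!
Writing `u(λ,λ') = e^{iT(λ-λ')}`, one has `C(s+T,t+T) - C(s,t) = ∫ e^{i(sλ-tλ')} (u - 1) f dμ`,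
so periodicity says that every Fourier coefficient of the finite complex measure `(u - 1) f μ`
vanishes. By Fourier uniqueness, `(u - 1) f = 0` `μ`-a.e., and as `|f| = 1` this means `u = 1`
`μ`-a.e., i.e. `λ - λ' ∈ (2π/T)ℤ` for `μ`-almost every point.

Fourier uniqueness for a complex density `h ∈ L¹(μ)` is reduced to the uniqueness theorem for
finite positive measures: `Re h` and `Im h` inherit the vanishing of the Fourier transform (use
`L ↦ -L` and conjugation), and for a real density `g` the positive and negative parts give two
finite measures `g⁺μ`, `g⁻μ` with equal characteristic functions.
-/

open MeasureTheory Real Complex ComplexConjugate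
open scoped ENNReal

lemma MeasureTheory.Integrable.exp_ofReal_mul_I_mul {α : Type*} [MeasurableSpace α]
    {μ : Measure α} {h : α → ℂ} (hh : Integrable h μ) {φ : α → ℝ}
    (hφ : AEMeasurable φ μ) :
    Integrable (fun x => cexp (φ x * I) * h x) μ :=
  hh.bdd_mul (c := 1) (by fun_prop) (ae_of_all _ fun x => (Complex.norm_exp_ofReal_mul_I _).le)

section FourierUniqueness

variable {E : Type*} [NormedAddCommGroup E] [NormedSpace ℝ E] [MeasurableSpace E] [BorelSpace E]
  {μ : Measure E}

lemma integrable_exp_mul {h : E → ℂ} (hh : Integrable h μ) (L : StrongDual ℝ E) :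
    Integrable (fun x => cexp (L x * I) * h x) μ :=
  hh.exp_ofReal_mul_I_mul L.continuous.aemeasurable

lemma charFunDual_withDensity_toNNReal_sub {g : E → ℝ} (hg : Integrable g μ)
    (L : StrongDual ℝ E) :
    charFunDual (μ.withDensity fun x => (g x).toNNReal) L
      - charFunDual (μ.withDensity fun x => (-g x).toNNReal) L
      = ∫ x, cexp (L x * I) * g x ∂μ := by
  have hm := hg.aemeasurable
  have hm' : AEMeasurable (fun x => -g x) μ := hm.neg
  have hpart : ∀ φ : E → ℝ, Integrable φ μ →
      Integrable (fun x => (φ x).toNNReal • cexp (L x * I)) μ := fun φ hφ => by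
    simp only [NNReal.smul_def, Complex.real_smul, mul_comm _ (cexp _), Real.coe_toNNReal']
    exact integrable_exp_mul hφ.pos_part.ofReal L
  rw [charFunDual_apply, charFunDual_apply,
    integral_withDensity_eq_integral_smul₀ hm.real_toNNReal,
    integral_withDensity_eq_integral_smul₀ hm'.real_toNNReal,
    ← integral_sub (hpart g hg) (hpart (fun x => -g x) hg.neg)]
  congr 1 with x
  rw [NNReal.smul_def, NNReal.smul_def, ← sub_smul, Real.coe_toNNReal', Real.coe_toNNReal',
    max_zero_sub_max_neg_zero_eq_self, Complex.real_smul, mul_comm]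

variable [CompleteSpace E] [SecondCountableTopology E]

lemma ae_eq_zero_of_forall_integral_exp_mul_ofReal_eq_zero {g : E → ℝ} (hg : Integrable g μ)
    (hz : ∀ L : StrongDual ℝ E, ∫ x, cexp (L x * I) * g x ∂μ = 0) : g =ᵐ[μ] 0 := by
  have hm := hg.aemeasurable
  have hm' : AEMeasurable (fun x => -g x) μ := hm.neg
  have : IsFiniteMeasure (μ.withDensity fun x => (g x).toNNReal) :=
    isFiniteMeasure_withDensity_ofReal hg.2
  have : IsFiniteMeasure (μ.withDensity fun x => (-g x).toNNReal) :=
    isFiniteMeasure_withDensity_ofReal hg.neg.2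
  have hν := Measure.ext_of_charFunDual (funext fun L =>
    sub_eq_zero.1 ((charFunDual_withDensity_toNNReal_sub hg L).trans (hz L)))
  rw [withDensity_eq_iff hm.real_toNNReal.coe_nnreal_ennreal hm'.real_toNNReal.coe_nnreal_ennreal
    (by simpa using measure_ne_top (μ.withDensity fun x => ((g x).toNNReal : ℝ≥0∞)) .univ)]
    at hν
  filter_upwards [hν] with x hx
  have := congrArg ENNReal.toReal hx
  simp only [ENNReal.coe_toReal, Real.coe_toNNReal'] at this
  rw [Pi.zero_apply, ← max_zero_sub_max_neg_zero_eq_self (g x), this, sub_self]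

lemma ae_eq_zero_of_forall_integral_exp_mul_eq_zero {h : E → ℂ} (hh : Integrable h μ)
    (hz : ∀ L : StrongDual ℝ E, ∫ x, cexp (L x * I) * h x ∂μ = 0) : h =ᵐ[μ] 0 := by
  have hconj : ∀ L : StrongDual ℝ E, ∫ x, cexp (L x * I) * conj (h x) ∂μ = 0 := fun L => by
    have := congrArg conj (hz (-L))
    rw [← integral_conj] at this
    simpa [← Complex.exp_conj] using this
  have hh' : Integrable (fun x => conj (h x)) μ := Complex.conjLIE.integrable_comp_iff.2 hh
  have hre : ∀ L : StrongDual ℝ E, ∫ x, cexp (L x * I) * (h x).re ∂μ = 0 := fun L => by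
    simp_rw [Complex.re_eq_add_conj, mul_div_assoc', mul_add]
    rw [integral_div, integral_add (integrable_exp_mul hh L) (integrable_exp_mul hh' L), hz, hconj]
    simp
  have him : ∀ L : StrongDual ℝ E, ∫ x, cexp (L x * I) * (h x).im ∂μ = 0 := fun L => by
    simp_rw [Complex.im_eq_sub_conj, mul_div_assoc', mul_sub]
    rw [integral_div, integral_sub (integrable_exp_mul hh L) (integrable_exp_mul hh' L), hz, hconj]
    simp
  filter_upwards [ae_eq_zero_of_forall_integral_exp_mul_ofReal_eq_zero hh.re hre,
    ae_eq_zero_of_forall_integral_exp_mul_ofReal_eq_zero hh.im him] with x hx hy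
  exact Complex.ext hx hy

end FourierUniqueness

lemma ae_eq_zero_iff_forall_integral_exp_mul_prod {μ : Measure (ℝ × ℝ)}
    {h : ℝ × ℝ → ℂ} (hh : Integrable h μ) :
    (∀ s t : ℝ, ∫ x, cexp (I * ↑(s * x.1 - t * x.2)) * h x ∂μ = 0) ↔ h =ᵐ[μ] 0 := by
  refine ⟨fun hz => ae_eq_zero_of_forall_integral_exp_mul_eq_zero hh fun L => ?_,
    fun hae s t => integral_eq_zero_of_ae (by filter_upwards [hae] with x hx; simp [hx])⟩
  refine (integral_congr_ae (ae_of_all _ fun x => ?_)).trans (hz (L (1, 0)) (-L (0, 1)))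
  have hL : L x = x.1 * L (1, 0) + x.2 * L (0, 1) := by
    conv_lhs => rw [show x = x.1 • (1, 0) + x.2 • (0, 1) by ext <;> simp]
    rw [map_add, map_smul, map_smul, smul_eq_mul, smul_eq_mul]
  simp only [hL]
  push_cast
  ring_nf

lemma exp_I_mul_mul_eq_one_iff {T : ℝ} (hT : T ≠ 0) (d : ℝ) :
    cexp (I * ↑(T * d)) = 1 ↔ ∃ k : ℤ, d = 2 * π * k / T := by
  rw [Complex.exp_eq_one_iff]
  refine exists_congr fun k => ?_
  rw [eq_div_iff hT, mul_comm d, mul_comm I,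
    show (k : ℂ) * (2 * π * I) = ↑(2 * π * k) * I by push_cast; ring,
    mul_left_inj' I_ne_zero, Complex.ofReal_inj]

/-- A complex Borel measure `F` on `ℝ²` is encoded by its polar decomposition
`dF = f dμ`, where `μ = |F|` is the (finite) total variation measure and `f` is a
measurable density of modulus one.  `C(s,t) = ∫ e^{i(sλ - tλ')} dF(λ,λ')` is periodic
with period `T` along the diagonal iff `F` is concentrated on the union of the lines
`λ - λ' = 2πk/T`, `k ∈ ℤ`. -/
theorem stmt18 (μ : Measure (ℝ × ℝ)) [IsFiniteMeasure μ]
    (f : ℝ × ℝ → ℂ) (hf_meas : Measurable f) (hf : ∀ x, ‖f x‖ = 1)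
    (T : ℝ) (hT : 0 < T)
    (C : ℝ → ℝ → ℂ)
    (hC : ∀ s t : ℝ, C s t =
      ∫ x : ℝ × ℝ, Complex.exp (Complex.I * ((s * x.1 - t * x.2 : ℝ) : ℂ)) * f x ∂μ) :
    (∀ s t : ℝ, C (s + T) (t + T) = C s t) ↔
      μ {x : ℝ × ℝ | ¬ ∃ k : ℤ, x.1 - x.2 = 2 * π * k / T} = 0 := by
  set u : ℝ × ℝ → ℂ := fun x => cexp (I * ↑(T * (x.1 - x.2)))
  have hf_int : Integrable f μ :=
    .of_bound hf_meas.aestronglyMeasurable 1 (ae_of_all _ fun x => (hf x).le)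
  have hint : ∀ s t : ℝ, Integrable (fun x => cexp (I * ↑(s * x.1 - t * x.2)) * f x) μ :=
    fun s t => by simpa only [mul_comm I] using hf_int.exp_ofReal_mul_I_mul (by fun_prop)
  have hshift : ∀ s t, C (s + T) (t + T) - C s t
      = ∫ x, cexp (I * ↑(s * x.1 - t * x.2)) * ((u x - 1) * f x) ∂μ := fun s t => by
    rw [hC, hC, ← integral_sub (hint _ _) (hint _ _)]
    congr 1 with x
    rw [show I * ↑((s + T) * x.1 - (t + T) * x.2)
        = I * ↑(s * x.1 - t * x.2) + I * ↑(T * (x.1 - x.2)) by push_cast; ring,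
      Complex.exp_add]
    ring
  calc (∀ s t : ℝ, C (s + T) (t + T) = C s t) ↔
        ∀ s t : ℝ, ∫ x, cexp (I * ↑(s * x.1 - t * x.2)) * ((u x - 1) * f x) ∂μ = 0 := by
        simp only [← hshift, sub_eq_zero]
    _ ↔ ∀ᵐ x ∂μ, (u x - 1) * f x = 0 := ae_eq_zero_iff_forall_integral_exp_mul_prod <| by
        simpa only [u, sub_mul, one_mul, mul_comm I, Pi.sub_def] using
          (hf_int.exp_ofReal_mul_I_mul (φ := fun x => T * (x.1 - x.2)) (by fun_prop)).sub hf_int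
    _ ↔ ∀ᵐ x ∂μ, ∃ k : ℤ, x.1 - x.2 = 2 * π * k / T := by
        refine Filter.eventually_congr (ae_of_all _ fun x => ?_)
        rw [mul_eq_zero_iff_right (norm_ne_zero_iff.1 ((hf x).trans_ne one_ne_zero)), sub_eq_zero,
          exp_I_mul_mul_eq_one_iff hT.ne']
    _ ↔ _ := ae_iff
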